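/- For each n ≥ 1 and k ≥ 0, the Wajsberg chain Ł_{n,k} = Γ(ℤ ×_lex ℤ, (n,k)) is subdirectly irreducible: its congruence lattice has a unique minimal nontrivial congruence. -/

import Mathlib

/-- The interval `[0, u]` in a totally ordered abelian group: the universe of
the Wajsberg hoop `Γ(G, u)`. -/
def Gam {G : Type*} [AddCommGroup G] [LinearOrder G] [IsOrderedAddMonoid G] (u : G) : Type _ :=
  {x : G // 0 ≤ x ∧ x ≤ u}

/-- Product `a·b = max(a+b-u, 0)` of `Γ(G,u)`. -/
def hmul {G : Type*} [AddCommGroup G] [LinearOrder G] [IsOrderedAddMonoid G] {u : G} (a b : Gam u) : Gam u :=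
  ⟨max (a.1 + b.1 - u) 0, le_max_right _ _,
    max_le (sub_le_iff_le_add.mpr (add_le_add a.2.2 b.2.2)) (a.2.1.trans a.2.2)⟩

/-- Residuum `a→b = min(u-a+b, u)` of `Γ(G,u)`. -/
def himp {G : Type*} [AddCommGroup G] [LinearOrder G] [IsOrderedAddMonoid G] {u : G} (a b : Gam u) : Gam u :=
  ⟨min (u - a.1 + b.1) u,
    le_min (add_nonneg (sub_nonneg.mpr a.2.2) b.2.1) (a.2.1.trans a.2.2),
    min_le_right _ _⟩

/-- Top element (monoid unit) of `Γ(G,u)`. -/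
def hone {G : Type*} [AddCommGroup G] [LinearOrder G] [IsOrderedAddMonoid G] (u : G) (hu : 0 ≤ u) : Gam u :=
  ⟨u, hu, le_rfl⟩

theorem lex_nonneg (a b : ℤ) (h : 0 < a) : (0 : ℤ ×ₗ ℤ) ≤ toLex (a, b) :=
  (Prod.Lex.le_iff (x := toLex (0, 0)) (y := toLex (a, b))).mpr (Or.inl h)

/-- A congruence of the algebra `⟨A, m, i⟩`. -/
def IsCong {A : Type*} (m i : A → A → A) (r : A → A → Prop) : Prop :=
  Equivalence r ∧ (∀ a b c d, r a b → r c d → r (m a c) (m b d)) ∧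
    (∀ a b c d, r a b → r c d → r (i a c) (i b d))

/-!
The least nontrivial congruence identifies elements with the same first coordinate. A
nontrivial congruence `θ` relates some `x < u` to `u`. Since `y = x · (x → y)` for `y ≤ x` and
`u - (x → y) = (u - y) - (u - x)`, induction shows that `θ` relates to `u` every `y` with
`u - y ≤ m • (u - x)`; applied to `a → b = u - (a - b)` this makes `θ` relate `a ≥ b` whenever
`a - b ≤ m • (u - x)`. When `a` and `b` have the same first coordinate, `a - b = (0, t)` is
infinitesimal in `ℤ ×ₗ ℤ`, hence below a multiple of the positive element `u - x`.
-/
namespace Gam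

variable {G : Type*} [AddCommGroup G] [LinearOrder G] [IsOrderedAddMonoid G] {u : G}

lemma hmul_hone (hu : 0 ≤ u) (a : Gam u) : hmul a (hone u hu) = a :=
  Subtype.ext <| (congrArg (max · 0) (add_sub_cancel_right a.1 u)).trans (max_eq_left a.2.1)

lemma himp_of_le (hu : 0 ≤ u) {a b : Gam u} (h : a.1 ≤ b.1) : himp a b = hone u hu :=
  Subtype.ext <| min_eq_right <| by
    have : u - a.1 + b.1 = u + (b.1 - a.1) := by abel
    exact this ▸ le_add_of_nonneg_right (sub_nonneg.2 h)

lemma hone_himp (hu : 0 ≤ u) (b : Gam u) : himp (hone u hu) b = b :=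
  Subtype.ext <| by
    show min (u - u + b.1) u = b.1
    rw [sub_self, zero_add]
    exact min_eq_left b.2.2

lemma val_himp_of_le {a b : Gam u} (h : b.1 ≤ a.1) : (himp a b).1 = u - (a.1 - b.1) :=
  calc min (u - a.1 + b.1) u = min (u - (a.1 - b.1)) u := by
        rw [sub_sub_eq_add_sub, add_sub_right_comm]
    _ = u - (a.1 - b.1) := min_eq_left (sub_le_self u (sub_nonneg.2 h))

lemma hmul_himp_of_le {a b : Gam u} (h : b.1 ≤ a.1) : hmul a (himp a b) = b :=
  Subtype.ext <| by
    show max (a.1 + (himp a b).1 - u) 0 = b.1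
    have : a.1 + (u - (a.1 - b.1)) - u = b.1 := by abel
    rw [val_himp_of_le h, this]
    exact max_eq_left b.2.1

variable {r : Gam u → Gam u → Prop}

lemma exists_ne_hone_rel_hone (hu : 0 ≤ u) (hr : IsCong hmul himp r)
    (hnt : ¬ ∀ a b, r a b → a = b) : ∃ x, x ≠ hone u hu ∧ r x (hone u hu) := by
  push Not at hnt
  obtain ⟨a, b, hab, hne⟩ := hnt
  wlog hba : b.1 ≤ a.1 generalizing a b
  · exact this b a (hr.1.symm hab) hne.symm (le_of_not_ge hba)
  refine ⟨himp a b, fun h => hne (Subtype.ext ?_), ?_⟩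
  · have h' : u - (a.1 - b.1) = u := (val_himp_of_le hba).symm.trans (congrArg Subtype.val h)
    exact sub_eq_zero.1 (sub_eq_self.1 h')
  · simpa only [himp_of_le hu le_rfl] using hr.2.2 a b b b hab (hr.1.refl b)

lemma rel_hone_of_sub_le_nsmul (hu : 0 ≤ u) (hr : IsCong hmul himp r) {x : Gam u}
    (hx : r x (hone u hu)) (m : ℕ) (y : Gam u) (hy : u - y.1 ≤ m • (u - x.1)) :
    r y (hone u hu) := by
  induction m generalizing y with
  | zero =>
    have : y = hone u hu :=
      Subtype.ext (le_antisymm y.2.2 (by simpa [sub_nonpos] using hy : u ≤ y.1))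
    exact this ▸ hr.1.refl _
  | succ m ih =>
    rcases le_total x.1 y.1 with hxy | hyx
    · simpa only [himp_of_le hu hxy, hone_himp] using
        hr.1.symm (hr.2.2 _ _ _ _ hx (hr.1.refl y))
    · have hstep : r (himp x y) (hone u hu) := ih _ <| by
        rw [val_himp_of_le hyx, sub_sub_cancel, ← sub_sub_sub_cancel_left y.1 x.1 u,
          sub_le_iff_le_add, ← succ_nsmul]
        exact hy
      simpa only [hmul_himp_of_le hyx, hmul_hone] using hr.2.1 _ _ _ _ hx hstep

lemma rel_of_sub_le_nsmul (hu : 0 ≤ u) (hr : IsCong hmul himp r) {x : Gam u}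
    (hx : r x (hone u hu)) {a b : Gam u} (hba : b.1 ≤ a.1) (m : ℕ)
    (hab : a.1 - b.1 ≤ m • (u - x.1)) : r a b := by
  have h : r (himp a b) (hone u hu) := rel_hone_of_sub_le_nsmul hu hr hx m _ <| by
    rwa [val_himp_of_le hba, sub_sub_cancel]
  simpa only [hmul_himp_of_le hba, hmul_hone] using hr.1.symm (hr.2.1 _ _ _ _ (hr.1.refl a) h)

lemma isCong_ker {H : Type*} [AddCommGroup H] [LinearOrder H] (φ : G →+ H) (hφ : Monotone φ) :
    IsCong hmul himp fun a b : Gam u => φ a.1 = φ b.1 := by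
  refine ⟨⟨fun _ => rfl, Eq.symm, Eq.trans⟩, fun a b c d hab hcd => ?_, fun a b c d hab hcd => ?_⟩
  · show φ (max _ _) = φ (max _ _)
    simp only [hφ.map_max, map_sub, map_add, hab, hcd]
  · show φ (min _ _) = φ (min _ _)
    simp only [hφ.map_min, map_sub, map_add, hab, hcd]

end Gam

lemma Prod.Lex.exists_sub_le_nsmul {α : Type*} [AddCommGroup α] [PartialOrder α]
    [IsOrderedAddMonoid α] {v w d : α ×ₗ ℤ} (hvw : (ofLex v).1 = (ofLex w).1) (hd : 0 < d) :
    ∃ m : ℕ, v - w ≤ m • d := by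
  set t := (ofLex v).2 - (ofLex w).2
  refine ⟨t.toNat + 1, Prod.Lex.le_iff.2 ?_⟩
  have hsmul : ofLex ((t.toNat + 1) • d) = (t.toNat + 1) • ofLex d := rfl
  rw [hsmul, ofLex_sub, Prod.fst_sub, Prod.snd_sub, Prod.smul_fst, Prod.smul_snd, hvw, sub_self]
  obtain h | ⟨h1, h2⟩ : 0 < (ofLex d).1 ∨ 0 = (ofLex d).1 ∧ 0 < (ofLex d).2 :=
    Prod.Lex.lt_iff.1 hd
  · exact .inl (nsmul_pos h t.toNat.succ_ne_zero)
  · refine .inr ⟨by rw [← h1, smul_zero], ?_⟩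
    rw [nsmul_eq_mul]
    push_cast
    nlinarith [Int.self_le_toNat t, h2]

/-- for `n ≥ 1`, `k ≥ 0`, the Wajsberg chain `Ł_{n,k} = Γ(ℤ ×ₗ ℤ,(n,k))`
is subdirectly irreducible: there is a least nontrivial congruence (one contained in
every nontrivial congruence). -/
theorem Lnk_subdirectly_irreducible (n k : ℕ) (hn : 1 ≤ n) :
    ∃ r : Gam (toLex ((n : ℤ), (k : ℤ))) → Gam (toLex ((n : ℤ), (k : ℤ))) → Prop,
      IsCong hmul himp r ∧ ¬ (∀ a b, r a b → a = b) ∧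
      ∀ r', IsCong hmul himp r' → ¬ (∀ a b, r' a b → a = b) →
        ∀ a b, r a b → r' a b := by
  have hu : (0 : ℤ ×ₗ ℤ) ≤ toLex ((n : ℤ), (k : ℤ)) := lex_nonneg _ _ (by omega)
  let fst : ℤ ×ₗ ℤ →+ ℤ := (AddMonoidHom.fst ℤ ℤ).comp (ofLexAddEquiv (ℤ × ℤ)).toAddMonoidHom
  refine ⟨fun a b => fst a.1 = fst b.1, Gam.isCong_ker fst Prod.Lex.monotone_fst_ofLex, ?_, ?_⟩
  · intro h
    let below : Gam (toLex ((n : ℤ), (k : ℤ))) :=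
      ⟨toLex (n, k - 1), lex_nonneg _ _ (by omega),
        Prod.Lex.toLex_le_toLex.2 (.inr ⟨rfl, by omega⟩)⟩
    have hk : (k : ℤ) = k - 1 := congrArg (fun v => (ofLex v.1).2) (h (hone _ hu) below rfl)
    omega
  · intro r hr hnt a b hab
    obtain ⟨x, hx1, hx⟩ := Gam.exists_ne_hone_rel_hone hu hr hnt
    have hd : 0 < toLex ((n : ℤ), (k : ℤ)) - x.1 :=
      sub_pos.2 (lt_of_le_of_ne x.2.2 fun h => hx1 (Subtype.ext h))
    wlog hba : b.1 ≤ a.1 generalizing a b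
    · exact hr.1.symm (this b a hab.symm (le_of_not_ge hba))
    obtain ⟨m, hm⟩ := Prod.Lex.exists_sub_le_nsmul hab hd
    exact Gam.rel_of_sub_le_nsmul hu hr hx hba m hm
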